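/- (Damping injection dissipates the desired energy) If q is a controlled Lagrangian trajectory for potential V with control u(t) = β(q(t)) + v(q̇(t)), where v(w) = −g(q(t))ᵀ (g(q(t)) g(q(t))ᵀ)⁻¹ K_d w, then the desired total energy E_d(t) = (1/2) q̇(t)ᵀ M(q(t)) q̇(t) + V_d(q(t)) is differentiable with E_d'(t) = −q̇(t)ᵀ K_d q̇(t) for all t; in particular, if K_d is positive semidefinite then E_d'(t) ≤ 0 for all t, so E_d is nonincreasing. -/

import Mathlib

open Matrix

/-! Since `Aᵀ (A Aᵀ)⁻¹` is a right inverse of `A`, the closed-loop input force is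
`g u = ∇V - ∇V_d - K_d q̇`. With `M` symmetric, the kinetic energy has derivative
`q̇ᵀ M q̈ + ½ q̇ᵀ Ṁ q̇`; substituting the equation of motion cancels the `Ṁ` term and `∇V`, and
adding `d/dt V_d(q) = q̇ᵀ ∇V_d` leaves `E_d' = -q̇ᵀ K_d q̇`. -/

namespace Matrix

theorem mulVec_transpose_mulVec_nonsing_inv_mul_transpose {m n R : Type*} [Fintype m]
    [Fintype n] [DecidableEq m] [CommRing R] {A : Matrix m n R} (hA : IsUnit (A * Aᵀ))
    (w : m → R) : A *ᵥ (Aᵀ *ᵥ ((A * Aᵀ)⁻¹ *ᵥ w)) = w := by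
  rw [mulVec_mulVec, mulVec_mulVec, mul_nonsing_inv _ ((isUnit_iff_isUnit_det _).mp hA),
    one_mulVec]

end Matrix

theorem ContinuousLinearMap.sum_smul_proj_apply {𝕜 ι : Type*} [NontriviallyNormedField 𝕜]
    [Fintype ι] (c w : ι → 𝕜) : (∑ i, c i • (proj i : (ι → 𝕜) →L[𝕜] 𝕜)) w = w ⬝ᵥ c := by
  simp only [_root_.sum_apply, _root_.smul_apply, proj_apply,
    smul_eq_mul, dotProduct, mul_comm]

section Deriv

variable {𝕜 m n : Type*} [NontriviallyNormedField 𝕜] [Fintype n] {x y : 𝕜 → n → 𝕜}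
  {x' y' : n → 𝕜} {t : 𝕜}

theorem HasDerivAt.dotProduct (hx : HasDerivAt x x' t) (hy : HasDerivAt y y' t) :
    HasDerivAt (fun s => x s ⬝ᵥ y s) (x' ⬝ᵥ y t + x t ⬝ᵥ y') t := by
  have hsum := HasDerivAt.fun_sum (u := Finset.univ) fun i _ =>
    (hasDerivAt_pi.mp hx i).fun_mul (hasDerivAt_pi.mp hy i)
  rw [Finset.sum_add_distrib] at hsum
  exact hsum

theorem HasDerivAt.mulVec {A : 𝕜 → Matrix m n 𝕜} {A' : Matrix m n 𝕜}
    (hA : ∀ i j, HasDerivAt (fun s => A s i j) (A' i j) t) (hx : HasDerivAt x x' t) :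
    HasDerivAt (fun s => A s *ᵥ x s) (A' *ᵥ x t + A t *ᵥ x') t :=
  hasDerivAt_pi.mpr fun i => (hasDerivAt_pi.mpr (hA i)).dotProduct hx

theorem HasDerivAt.dotProduct_mulVec_self_of_isSymm {A : 𝕜 → Matrix n n 𝕜}
    {A' : Matrix n n 𝕜} (hsymm : (A t).IsSymm)
    (hA : ∀ i j, HasDerivAt (fun s => A s i j) (A' i j) t) (hx : HasDerivAt x x' t) :
    HasDerivAt (fun s => x s ⬝ᵥ A s *ᵥ x s) (2 * (x t ⬝ᵥ A t *ᵥ x') + x t ⬝ᵥ A' *ᵥ x t) t := by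
  refine (hx.dotProduct (HasDerivAt.mulVec hA hx)).congr_deriv ?_
  have hswap : x' ⬝ᵥ A t *ᵥ x t = x t ⬝ᵥ A t *ᵥ x' := by
    rw [dotProduct_mulVec, ← mulVec_transpose, hsymm.eq, dotProduct_comm]
  rw [hswap, dotProduct_add]
  ring

end Deriv

theorem damping_injection_dissipates_desired_energy_general
    (m k : ℕ)
    -- the curve, its velocity and acceleration
    (q qd qdd : ℝ → (Fin m → ℝ))
    (hq : ∀ t, HasDerivAt q (qd t) t)
    (hqd : ∀ t, HasDerivAt qd (qdd t) t)
    -- the mass matrix, symmetric, with `t ↦ M (q t)` differentiable with derivative `Md`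
    (M : (Fin m → ℝ) → Matrix (Fin m) (Fin m) ℝ)
    (hMsymm : ∀ x, (M x).IsSymm)
    (Md : ℝ → Matrix (Fin m) (Fin m) ℝ)
    (hM : ∀ i j t, HasDerivAt (fun s => M (q s) i j) (Md t i j) t)
    -- the potential energy, differentiable with gradient `gradV`
    (gradV : (Fin m → ℝ) → (Fin m → ℝ))
    -- the desired potential energy, differentiable with gradient `gradVd`
    (Vd : (Fin m → ℝ) → ℝ)
    (gradVd : (Fin m → ℝ) → (Fin m → ℝ))
    (hVd : ∀ x, HasFDerivAt Vd
      (∑ i, gradVd x i • (ContinuousLinearMap.proj i : (Fin m → ℝ) →L[ℝ] ℝ)) x)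
    -- the input matrix, fully actuated: `g(x) g(x)ᵀ` is invertible for every `x`
    (g : (Fin m → ℝ) → Matrix (Fin m) (Fin k) ℝ)
    (hg : ∀ x, IsUnit (g x * (g x)ᵀ))
    -- the potential-energy-shaping control
    (β : (Fin m → ℝ) → (Fin k → ℝ))
    (hβ : ∀ x, β x = ((g x)ᵀ).mulVec (((g x * (g x)ᵀ)⁻¹).mulVec (gradV x - gradVd x)))
    -- the damping matrix and the damping injection (with `g` evaluated along the curve)
    (Kd : Matrix (Fin m) (Fin m) ℝ)
    (v : ℝ → (Fin m → ℝ) → (Fin k → ℝ))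
    (hv : ∀ t w, v t w =
      -(((g (q t))ᵀ).mulVec (((g (q t) * (g (q t))ᵀ)⁻¹).mulVec (Kd.mulVec w))))
    -- `q` is a controlled Lagrangian trajectory for `V` with control `β(q(t)) + v(q̇(t))`
    (u : ℝ → (Fin k → ℝ))
    (hu : ∀ t, u t = β (q t) + v t (qd t))
    (htraj : ∀ t, (M (q t)).mulVec (qdd t) =
      -((1 : ℝ) / 2) • (Md t).mulVec (qd t) - gradV (q t) + (g (q t)).mulVec (u t))
    -- the desired total energy
    (Ed : ℝ → ℝ)
    (hEd : ∀ t, Ed t = (1 / 2 : ℝ) * (qd t ⬝ᵥ (M (q t)).mulVec (qd t)) + Vd (q t)) :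
    (∀ t, HasDerivAt Ed (-(qd t ⬝ᵥ Kd.mulVec (qd t))) t) ∧
    (Kd.PosSemidef → (∀ t, -(qd t ⬝ᵥ Kd.mulVec (qd t)) ≤ 0) ∧ Antitone Ed) := by
  have hforce : ∀ t, g (q t) *ᵥ u t = gradV (q t) - gradVd (q t) - Kd *ᵥ qd t := by
    intro t
    rw [hu, hβ, hv, mulVec_add, mulVec_neg,
      mulVec_transpose_mulVec_nonsing_inv_mul_transpose (hg _),
      mulVec_transpose_mulVec_nonsing_inv_mul_transpose (hg _), ← sub_eq_add_neg]
  have hEd' : ∀ t, HasDerivAt Ed (-(qd t ⬝ᵥ Kd *ᵥ qd t)) t := by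
    intro t
    have hkinetic := (hqd t).dotProduct_mulVec_self_of_isSymm (hMsymm (q t)) (hM · · t)
    have hpotential : HasDerivAt (fun s => Vd (q s)) (qd t ⬝ᵥ gradVd (q t)) t := by
      simpa only [ContinuousLinearMap.sum_smul_proj_apply, Function.comp_def] using
        (hVd (q t)).comp_hasDerivAt t (hq t)
    rw [funext hEd]
    refine ((hkinetic.const_mul (1 / 2)).add hpotential).congr_deriv ?_
    rw [htraj, hforce]
    simp only [dotProduct_add, dotProduct_sub, dotProduct_smul, smul_eq_mul]
    ring
  refine ⟨hEd', fun hKd => ?_⟩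
  have hnonpos : ∀ t, -(qd t ⬝ᵥ Kd *ᵥ qd t) ≤ 0 := fun t =>
    neg_nonpos.mpr (hKd.dotProduct_mulVec_nonneg (qd t))
  exact ⟨hnonpos, antitone_of_hasDerivAt_nonpos hEd' hnonpos⟩

/-- Damping injection dissipates the desired energy: if `q` is a controlled Lagrangian
trajectory for potential `V` with control `u(t) = β(q(t)) + v(q̇(t))`, where
`v(w) = −g(q(t))ᵀ (g(q(t)) g(q(t))ᵀ)⁻¹ K_d w`, then the desired total energy `E_d` is
differentiable with `E_d'(t) = −q̇(t)ᵀ K_d q̇(t)`; in particular, if `K_d` is positive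
semidefinite then `E_d'(t) ≤ 0` for all `t`, so `E_d` is nonincreasing. -/
theorem damping_injection_dissipates_desired_energy
    (m k : ℕ) (hm : 1 ≤ m) (hk : 1 ≤ k)
    -- the curve, its velocity and acceleration
    (q qd qdd : ℝ → (Fin m → ℝ))
    (hq : ∀ t, HasDerivAt q (qd t) t)
    (hqd : ∀ t, HasDerivAt qd (qdd t) t)
    -- the mass matrix, symmetric, with `t ↦ M (q t)` differentiable with derivative `Md`
    (M : (Fin m → ℝ) → Matrix (Fin m) (Fin m) ℝ)
    (hMsymm : ∀ x, (M x).IsSymm)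
    (Md : ℝ → Matrix (Fin m) (Fin m) ℝ)
    (hM : ∀ i j t, HasDerivAt (fun s => M (q s) i j) (Md t i j) t)
    -- the potential energy, differentiable with gradient `gradV`
    (V : (Fin m → ℝ) → ℝ)
    (gradV : (Fin m → ℝ) → (Fin m → ℝ))
    (hV : ∀ x, HasFDerivAt V
      (∑ i, gradV x i • (ContinuousLinearMap.proj i : (Fin m → ℝ) →L[ℝ] ℝ)) x)
    -- the desired potential energy, differentiable with gradient `gradVd`
    (Vd : (Fin m → ℝ) → ℝ)
    (gradVd : (Fin m → ℝ) → (Fin m → ℝ))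
    (hVd : ∀ x, HasFDerivAt Vd
      (∑ i, gradVd x i • (ContinuousLinearMap.proj i : (Fin m → ℝ) →L[ℝ] ℝ)) x)
    -- the input matrix, fully actuated: `g(x) g(x)ᵀ` is invertible for every `x`
    (g : (Fin m → ℝ) → Matrix (Fin m) (Fin k) ℝ)
    (hg : ∀ x, IsUnit (g x * (g x)ᵀ))
    -- the potential-energy-shaping control
    (β : (Fin m → ℝ) → (Fin k → ℝ))
    (hβ : ∀ x, β x = ((g x)ᵀ).mulVec (((g x * (g x)ᵀ)⁻¹).mulVec (gradV x - gradVd x)))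
    -- the damping matrix and the damping injection (with `g` evaluated along the curve)
    (Kd : Matrix (Fin m) (Fin m) ℝ)
    (v : ℝ → (Fin m → ℝ) → (Fin k → ℝ))
    (hv : ∀ t w, v t w =
      -(((g (q t))ᵀ).mulVec (((g (q t) * (g (q t))ᵀ)⁻¹).mulVec (Kd.mulVec w))))
    -- `q` is a controlled Lagrangian trajectory for `V` with control `β(q(t)) + v(q̇(t))`
    (u : ℝ → (Fin k → ℝ))
    (hu : ∀ t, u t = β (q t) + v t (qd t))
    (htraj : ∀ t, (M (q t)).mulVec (qdd t) =
      -((1 : ℝ) / 2) • (Md t).mulVec (qd t) - gradV (q t) + (g (q t)).mulVec (u t))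
    -- the desired total energy
    (Ed : ℝ → ℝ)
    (hEd : ∀ t, Ed t = (1 / 2 : ℝ) * (qd t ⬝ᵥ (M (q t)).mulVec (qd t)) + Vd (q t)) :
    (∀ t, HasDerivAt Ed (-(qd t ⬝ᵥ Kd.mulVec (qd t))) t) ∧
    (Kd.PosSemidef → (∀ t, -(qd t ⬝ᵥ Kd.mulVec (qd t)) ≤ 0) ∧ Antitone Ed) :=
  damping_injection_dissipates_desired_energy_general m k q qd qdd hq hqd M hMsymm Md hM gradV Vd
    gradVd hVd g hg β hβ Kd v hv u hu htraj Ed hEd
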